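/- Let {(x_i, y_i) : i = 0, 1, …, N} be a data set with x₀ < x₁ < ⋯ < x_N, I = [x₀, x_N], and for each i = 1, …, N let l_i : I → [x_{i−1}, x_i] be a homeomorphism with l_i(x₀) = x_{i−1}, l_i(x_N) = x_i. Fix a, b with all y_i ∈ [a,b], and let C*(I) denote the set of continuous functions f : I → [a,b] with f(x_i) = y_i for i = 0, …, N, endowed with the sup metric. Suppose for each k ∈ ℕ the maps F_{i,k} : I × [a,b] → [a,b] are continuous, satisfy F_{i,k}(x₀, y₀) = y_{i−1}, F_{i,k}(x_N, y_N) = y_i, and |F_{i,k}(x, y) − F_{i,k}(x, y')| ≤ φ(|y − y'|) for all x ∈ I, y, y' ∈ [a,b], where φ : [0,∞) → [0,∞) is non-decreasing, φ(t) < t for all t > 0, and Σ_{k=1}^∞ φ^k(t) < ∞ for every t > 0. Define T_k : C*(I) → C*(I) by (T_k f)(x) = F_{i,k}(l_i^{−1}(x), f(l_i^{−1}(x))) for x ∈ [x_{i−1}, x_i]. Then there exists a unique continuous function f* : I → [a,b] with f*(x_i) = y_i for all i = 0, …, N such that for every g ∈ C*(I) the backward trajectories Ψ_k(g) = T₁∘T₂∘⋯∘T_k(g)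 converge uniformly to f*. -/

import Mathlib

/-!
Each `T_k` is a `φ`-contraction for the sup distance on `C*(I)`, since every point of `I` lies in
some `[x_{i-1}, x_i]`. Hence `d(Ψ_n g, Ψ_n h) ≤ φⁿ(M)` for `g, h ∈ C*(I)`, where `M = b - a + 1`
bounds the diameter of `C*(I)` (the `+ 1` because summability of `φᵏ(t)` is only assumed for
`t > 0`); in particular `d(Ψ_n g, Ψ_{n+1} g) = d(Ψ_n g, Ψ_n (T_{n+1} g)) ≤ φⁿ(M)`. Summability
then makes each trajectory uniformly convergent, and the first estimate gives all trajectories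
the same limit. `C*(I)` is closed under uniform limits and nonempty (it contains the Lagrange
interpolant clamped to `[a, b]`), so the limit lies in `C*(I)` and is unique.
-/

open Filter Set Topology

/-- Backward composition: `bwdComp g k = g 0 ∘ g 1 ∘ ⋯ ∘ g (k-1)`
(i.e. `g₁ ∘ g₂ ∘ ⋯ ∘ g_k` in 1-based notation). -/
def bwdComp {α : Type*} (g : ℕ → α → α) : ℕ → α → α
  | 0 => id
  | k + 1 => fun a => bwdComp g k (g k a)

/-- Membership in `C*(I)`: continuous on `I = [x₀, x_N]`, with values in `[a,b]`,
interpolating the data `(x i, y i)`. -/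
def InCstar (N : ℕ) (x y : ℕ → ℝ) (a b : ℝ) (f : ℝ → ℝ) : Prop :=
  ContinuousOn f (Set.Icc (x 0) (x N)) ∧
    (∀ t ∈ Set.Icc (x 0) (x N), f t ∈ Set.Icc a b) ∧
    ∀ i, i ≤ N → f (x i) = y i

section BackwardTrajectory

theorem mapsTo_bwdComp {γ : Type*} {g : ℕ → γ → γ} {S : Set γ}
    (hg : ∀ k, MapsTo (g k) S S) : ∀ n, MapsTo (bwdComp g n) S S
  | 0 => mapsTo_id S
  | n + 1 => (mapsTo_bwdComp hg n).comp (hg n)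

variable {α β : Type*} [PseudoMetricSpace β] {s : Set α}

theorem dist_bwdComp_le_iterate {S : Set (α → β)} {T : ℕ → (α → β) → α → β}
    {φ : ℝ → ℝ} (hTS : ∀ k, MapsTo (T k) S S)
    (hT : ∀ k, ∀ g ∈ S, ∀ h ∈ S, ∀ r, (∀ t ∈ s, dist (g t) (h t) ≤ r) →
      ∀ t ∈ s, dist (T k g t) (T k h t) ≤ φ r) :
    ∀ n, ∀ g ∈ S, ∀ h ∈ S, ∀ r, (∀ t ∈ s, dist (g t) (h t) ≤ r) →
      ∀ t ∈ s, dist (bwdComp T n g t) (bwdComp T n h t) ≤ φ^[n] r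
  | 0, _, _, _, _, _, hr => hr
  | n + 1, g, hg, h, hh, r, hr => by
    rw [Function.iterate_succ_apply]
    exact dist_bwdComp_le_iterate hTS hT n _ (hTS n hg) _ (hTS n hh) _ (hT n g hg h hh r hr)

theorem tendstoUniformlyOn_of_dist_le {ι : Type*} {l : Filter ι} {F : ι → α → β} {f : α → β}
    {c : ι → ℝ} (hc : Tendsto c l (𝓝 0)) (hF : ∀ n, ∀ t ∈ s, dist (F n t) (f t) ≤ c n) :
    TendstoUniformlyOn F f l s := by
  refine Metric.tendstoUniformlyOn_iff.2 fun ε hε => ?_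
  filter_upwards [hc.eventually (gt_mem_nhds hε)] with n hn t ht
  rw [dist_comm]
  exact (hF n t ht).trans_lt hn

theorem exists_tendstoUniformlyOn_bwdComp [CompleteSpace β] {S : Set (α → β)}
    {T : ℕ → (α → β) → α → β} {φ : ℝ → ℝ} {M : ℝ} (hS : S.Nonempty)
    (hTS : ∀ k, MapsTo (T k) S S)
    (hT : ∀ k, ∀ g ∈ S, ∀ h ∈ S, ∀ r, (∀ t ∈ s, dist (g t) (h t) ≤ r) →
      ∀ t ∈ s, dist (T k g t) (T k h t) ≤ φ r)
    (hM : ∀ g ∈ S, ∀ h ∈ S, ∀ t ∈ s, dist (g t) (h t) ≤ M)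
    (hφM : Summable fun n => φ^[n] M) :
    ∃ f : α → β, ∀ g ∈ S, TendstoUniformlyOn (fun n => bwdComp T n g) f atTop s := by
  obtain ⟨g₀, hg₀⟩ := hS
  have hstep : ∀ t ∈ s, ∀ n, dist (bwdComp T n g₀ t) (bwdComp T (n + 1) g₀ t) ≤ φ^[n] M :=
    fun t ht n => dist_bwdComp_le_iterate hTS hT n _ hg₀ _ (hTS n hg₀) M
      (hM _ hg₀ _ (hTS n hg₀)) t ht
  have hlim : ∀ t, ∃ z, t ∈ s → Tendsto (fun n => bwdComp T n g₀ t) atTop (𝓝 z) := by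
    intro t
    by_cases ht : t ∈ s
    · exact (cauchySeq_tendsto_of_complete
        (cauchySeq_of_dist_le_of_summable _ (hstep t ht) hφM)).imp fun _ hz _ => hz
    · exact ⟨g₀ t, fun ht' => absurd ht' ht⟩
  choose f hf using hlim
  have htail : Tendsto (fun n => φ^[n] M + ∑' m, φ^[n + m] M) atTop (𝓝 0) := by
    simpa only [add_zero, add_comm] using
      hφM.tendsto_atTop_zero.add (tendsto_sum_nat_add fun m => φ^[m] M)
  refine ⟨f, fun g hg => tendstoUniformlyOn_of_dist_le htail fun n t ht => ?_⟩
  calc dist (bwdComp T n g t) (f t)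
      ≤ dist (bwdComp T n g t) (bwdComp T n g₀ t) + dist (bwdComp T n g₀ t) (f t) :=
        dist_triangle _ _ _
    _ ≤ φ^[n] M + ∑' m, φ^[n + m] M :=
        add_le_add (dist_bwdComp_le_iterate hTS hT n g hg g₀ hg₀ M (hM g hg g₀ hg₀) t ht)
          (dist_le_tsum_of_dist_le_of_tendsto _ (hstep t ht) hφM (hf t ht) n)

end BackwardTrajectory

theorem exists_lt_mem_Icc_succ {α : Type*} [LinearOrder α] {x : ℕ → α} {N : ℕ} {t : α}
    (hN : 0 < N) (ht : t ∈ Icc (x 0) (x N)) : ∃ i < N, t ∈ Icc (x i) (x (i + 1)) := by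
  classical
  set i := Nat.findGreatest (fun j => x j ≤ t) (N - 1)
  have hiN : i ≤ N - 1 := Nat.findGreatest_le _
  refine ⟨i, by omega, Nat.findGreatest_spec (P := fun j => x j ≤ t) (Nat.zero_le _) ht.1,
    ?_⟩
  by_cases hlast : i + 1 ≤ N - 1
  · exact le_of_lt (not_le.1 (Nat.findGreatest_is_greatest (Nat.lt_succ_self i) hlast))
  · rw [show i + 1 = N by omega]
    exact ht.2

section Cstar

variable {N : ℕ} {x y : ℕ → ℝ} {a b : ℝ}

theorem exists_inCstar (hx : InjOn x (Iic N)) (hy : ∀ i, i ≤ N → y i ∈ Icc a b) :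
    ∃ g, InCstar N x y a b g := by
  classical
  have hab : a ≤ b := (hy 0 (Nat.zero_le N)).1.trans (hy 0 (Nat.zero_le N)).2
  let p := Lagrange.interpolate (Finset.range (N + 1)) x y
  refine ⟨fun t => projIcc a b hab (p.eval t), ?_, fun t _ => Subtype.prop _, fun i hi => ?_⟩
  · exact (continuous_subtype_val.comp (continuous_projIcc.comp p.continuous)).continuousOn
  · have hxinj : InjOn x (Finset.range (N + 1)) :=
      hx.mono fun j hj => Nat.lt_succ_iff.1 (Finset.mem_range.1 hj)
    have hiN : i ∈ Finset.range (N + 1) := Finset.mem_range.2 (Nat.lt_succ_of_le hi)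
    simp only [p, Lagrange.eval_interpolate_at_node y hxinj hiN, projIcc_of_mem hab (hy i hi)]

theorem InCstar.of_tendstoUniformlyOn {ι : Type*} {l : Filter ι} [l.NeBot] {u : ι → ℝ → ℝ}
    {f : ℝ → ℝ} (hu : ∀ n, InCstar N x y a b (u n))
    (hf : TendstoUniformlyOn u f l (Icc (x 0) (x N)))
    (hxI : ∀ i, i ≤ N → x i ∈ Icc (x 0) (x N)) : InCstar N x y a b f := by
  refine ⟨hf.continuousOn (Frequently.of_forall fun n => (hu n).1), fun t ht => ?_,
    fun i hi => ?_⟩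
  · exact isClosed_Icc.mem_of_tendsto (hf.tendsto_at ht)
      (Eventually.of_forall fun n => (hu n).2.1 t ht)
  · refine tendsto_nhds_unique (hf.tendsto_at (hxI i hi)) ?_
    simpa only [(hu _).2.2 i hi] using tendsto_const_nhds

theorem dist_readBajraktarevic_le (hN : 0 < N) {linv : ℕ → ℝ → ℝ}
    (hlinv : ∀ i, 1 ≤ i → i ≤ N → MapsTo (linv i) (Icc (x (i - 1)) (x i)) (Icc (x 0) (x N)))
    {φ : ℝ → ℝ} (hφmono : ∀ s t : ℝ, 0 ≤ s → s ≤ t → φ s ≤ φ t) {G : ℕ → ℝ → ℝ → ℝ}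
    (hGcontr : ∀ i, 1 ≤ i → i ≤ N → ∀ t ∈ Icc (x 0) (x N),
      ∀ s ∈ Icc a b, ∀ s' ∈ Icc a b, |G i t s - G i t s'| ≤ φ |s - s'|)
    {U : (ℝ → ℝ) → ℝ → ℝ}
    (hU : ∀ g, InCstar N x y a b g → ∀ i, 1 ≤ i → i ≤ N → ∀ s ∈ Icc (x (i - 1)) (x i),
      U g s = G i (linv i s) (g (linv i s)))
    {g h : ℝ → ℝ} (hg : InCstar N x y a b g) (hh : InCstar N x y a b h) {r : ℝ}
    (hr : ∀ t ∈ Icc (x 0) (x N), dist (g t) (h t) ≤ r) :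
    ∀ t ∈ Icc (x 0) (x N), dist (U g t) (U h t) ≤ φ r := by
  intro t ht
  obtain ⟨i, hi, hti⟩ := exists_lt_mem_Icc_succ hN ht
  replace hti : t ∈ Icc (x (i + 1 - 1)) (x (i + 1)) := hti
  have hu := hlinv (i + 1) (by omega) hi hti
  rw [hU g hg (i + 1) (by omega) hi t hti, hU h hh (i + 1) (by omega) hi t hti, Real.dist_eq]
  exact (hGcontr (i + 1) (by omega) hi _ hu _ (hg.2.1 _ hu) _ (hh.2.1 _ hu)).trans
    (hφmono _ _ (abs_nonneg _) (hr _ hu))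

end Cstar

theorem nonstationary_fractal_interpolation_general
    (N : ℕ) (hN : 0 < N) (x y : ℕ → ℝ)
    (hx : ∀ i, i < N → x i < x (i + 1))
    (a b : ℝ) (hy : ∀ i, i ≤ N → y i ∈ Set.Icc a b)
    (l linv : ℕ → ℝ → ℝ)
    (hlinv : ∀ i, 1 ≤ i → i ≤ N → ∀ s ∈ Set.Icc (x (i - 1)) (x i),
      linv i s ∈ Set.Icc (x 0) (x N) ∧ l i (linv i s) = s)
    (φ : ℝ → ℝ)
    (hφmono : ∀ s t : ℝ, 0 ≤ s → s ≤ t → φ s ≤ φ t)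
    (hφsum : ∀ t : ℝ, 0 < t → Summable (fun k => φ^[k + 1] t))
    (F : ℕ → ℕ → ℝ → ℝ → ℝ)
    (hFcontr : ∀ i k, 1 ≤ i → i ≤ N → ∀ t ∈ Set.Icc (x 0) (x N),
      ∀ s ∈ Set.Icc a b, ∀ s' ∈ Set.Icc a b,
        |F i k t s - F i k t s'| ≤ φ |s - s'|)
    -- the Read–Bajraktarević operators `T k : C*(I) → C*(I)`,
    -- `T k` being the 1-based operator `T_{k+1}`
    (T : ℕ → (ℝ → ℝ) → (ℝ → ℝ))
    (hTmaps : ∀ k g, InCstar N x y a b g → InCstar N x y a b (T k g))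
    (hTdef : ∀ k g, InCstar N x y a b g →
      ∀ i, 1 ≤ i → i ≤ N → ∀ s ∈ Set.Icc (x (i - 1)) (x i),
        T k g s = F i (k + 1) (linv i s) (g (linv i s))) :
    ∃ fstar : ℝ → ℝ,
      (ContinuousOn fstar (Set.Icc (x 0) (x N)) ∧
        (∀ t ∈ Set.Icc (x 0) (x N), fstar t ∈ Set.Icc a b) ∧
        ∀ i, i ≤ N → fstar (x i) = y i) ∧
      (∀ g, InCstar N x y a b g →
        TendstoUniformlyOn (fun k => bwdComp T k g) fstar atTop
          (Set.Icc (x 0) (x N))) ∧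
      ∀ f' : ℝ → ℝ,
        (ContinuousOn f' (Set.Icc (x 0) (x N)) ∧
          (∀ t ∈ Set.Icc (x 0) (x N), f' t ∈ Set.Icc a b) ∧
          ∀ i, i ≤ N → f' (x i) = y i) →
        (∀ g, InCstar N x y a b g →
          TendstoUniformlyOn (fun k => bwdComp T k g) f' atTop
            (Set.Icc (x 0) (x N))) →
        Set.EqOn f' fstar (Set.Icc (x 0) (x N)) := by
  have hmono : StrictMonoOn x (Iic N) := strictMonoOn_Iic_of_lt_succ hx
  have hxI : ∀ i, i ≤ N → x i ∈ Icc (x 0) (x N) := fun i hi =>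
    ⟨hmono.monotoneOn (Nat.zero_le N) hi (Nat.zero_le i), hmono.monotoneOn hi self_mem_Iic hi⟩
  obtain ⟨g₀, hg₀⟩ := exists_inCstar hmono.injOn hy
  have hab : a ≤ b := (hy 0 (Nat.zero_le N)).1.trans (hy 0 (Nat.zero_le N)).2
  have hTS : ∀ k, MapsTo (T k) {g | InCstar N x y a b g} {g | InCstar N x y a b g} :=
    fun k g hg => hTmaps k g hg
  obtain ⟨f, hf⟩ := exists_tendstoUniformlyOn_bwdComp (M := b - a + 1) ⟨g₀, hg₀⟩ hTS
    (fun k g hg h hh r hr => dist_readBajraktarevic_le hN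
      (fun i hi hiN s hs => (hlinv i hi hiN s hs).1) hφmono
      (fun i hi hiN => hFcontr i (k + 1) hi hiN) (hTdef k) hg hh hr)
    (fun g hg h hh t ht => (Real.dist_le_of_mem_Icc (hg.2.1 t ht) (hh.2.1 t ht)).trans
      (by linarith))
    ((summable_nat_add_iff 1).1 (hφsum _ (by linarith)))
  exact ⟨f,
    InCstar.of_tendstoUniformlyOn (fun n => mapsTo_bwdComp hTS n hg₀) (hf g₀ hg₀) hxI, hf,
    fun f' _ hf' t ht => tendsto_nhds_unique ((hf' g₀ hg₀).tendsto_at ht)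
      ((hf g₀ hg₀).tendsto_at ht)⟩

/-- For interpolation data `x₀ < x₁ < ⋯ < x_N`, `y i ∈ [a,b]`,
homeomorphisms `l i : I → [x_{i-1}, x_i]` (with inverses `linv i`) matching the
endpoints, and continuous maps `F i k : I × [a,b] → [a,b]` matching the data at the
endpoints and contractive in the second variable with a common non-decreasing `φ`
satisfying `φ(t) < t` and `∑ₖ φ^k(t) < ∞` for `t > 0`, the backward trajectories
`Ψ_k(g) = T₁∘⋯∘T_k (g)` of the Read–Bajraktarević operators `T_k` converge uniformly
on `I`, for every `g ∈ C*(I)`, to one and the same function `f* : I → [a,b]`, which is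
continuous and satisfies `f*(x i) = y i`; such a limit function is unique. -/
theorem nonstationary_fractal_interpolation
    (N : ℕ) (hN : 0 < N) (x y : ℕ → ℝ)
    (hx : ∀ i, i < N → x i < x (i + 1))
    (a b : ℝ) (hy : ∀ i, i ≤ N → y i ∈ Set.Icc a b)
    (l linv : ℕ → ℝ → ℝ)
    (hl : ∀ i, 1 ≤ i → i ≤ N →
      Set.BijOn (l i) (Set.Icc (x 0) (x N)) (Set.Icc (x (i - 1)) (x i)) ∧
      ContinuousOn (l i) (Set.Icc (x 0) (x N)) ∧
      l i (x 0) = x (i - 1) ∧ l i (x N) = x i)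
    (hlinv : ∀ i, 1 ≤ i → i ≤ N → ∀ s ∈ Set.Icc (x (i - 1)) (x i),
      linv i s ∈ Set.Icc (x 0) (x N) ∧ l i (linv i s) = s)
    (hlinv' : ∀ i, 1 ≤ i → i ≤ N → ∀ t ∈ Set.Icc (x 0) (x N), linv i (l i t) = t)
    (φ : ℝ → ℝ)
    (hφmono : ∀ s t : ℝ, 0 ≤ s → s ≤ t → φ s ≤ φ t)
    (hφ0 : ∀ t : ℝ, 0 ≤ t → 0 ≤ φ t)
    (hφlt : ∀ t : ℝ, 0 < t → φ t < t)
    (hφsum : ∀ t : ℝ, 0 < t → Summable (fun k => φ^[k + 1] t))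
    (F : ℕ → ℕ → ℝ → ℝ → ℝ)
    (hFcont : ∀ i k, 1 ≤ i → i ≤ N →
      ContinuousOn (fun p : ℝ × ℝ => F i k p.1 p.2)
        (Set.Icc (x 0) (x N) ×ˢ Set.Icc a b))
    (hFmap : ∀ i k, 1 ≤ i → i ≤ N → ∀ t ∈ Set.Icc (x 0) (x N), ∀ s ∈ Set.Icc a b,
      F i k t s ∈ Set.Icc a b)
    (hFend : ∀ i k, 1 ≤ i → i ≤ N →
      F i k (x 0) (y 0) = y (i - 1) ∧ F i k (x N) (y N) = y i)
    (hFcontr : ∀ i k, 1 ≤ i → i ≤ N → ∀ t ∈ Set.Icc (x 0) (x N),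
      ∀ s ∈ Set.Icc a b, ∀ s' ∈ Set.Icc a b,
        |F i k t s - F i k t s'| ≤ φ |s - s'|)
    -- the Read–Bajraktarević operators `T k : C*(I) → C*(I)`,
    -- `T k` being the 1-based operator `T_{k+1}`
    (T : ℕ → (ℝ → ℝ) → (ℝ → ℝ))
    (hTmaps : ∀ k g, InCstar N x y a b g → InCstar N x y a b (T k g))
    (hTdef : ∀ k g, InCstar N x y a b g →
      ∀ i, 1 ≤ i → i ≤ N → ∀ s ∈ Set.Icc (x (i - 1)) (x i),
        T k g s = F i (k + 1) (linv i s) (g (linv i s))) :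
    ∃ fstar : ℝ → ℝ,
      (ContinuousOn fstar (Set.Icc (x 0) (x N)) ∧
        (∀ t ∈ Set.Icc (x 0) (x N), fstar t ∈ Set.Icc a b) ∧
        ∀ i, i ≤ N → fstar (x i) = y i) ∧
      (∀ g, InCstar N x y a b g →
        TendstoUniformlyOn (fun k => bwdComp T k g) fstar atTop
          (Set.Icc (x 0) (x N))) ∧
      ∀ f' : ℝ → ℝ,
        (ContinuousOn f' (Set.Icc (x 0) (x N)) ∧
          (∀ t ∈ Set.Icc (x 0) (x N), f' t ∈ Set.Icc a b) ∧
          ∀ i, i ≤ N → f' (x i) = y i) →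
        (∀ g, InCstar N x y a b g →
          TendstoUniformlyOn (fun k => bwdComp T k g) f' atTop
            (Set.Icc (x 0) (x N))) →
        Set.EqOn f' fstar (Set.Icc (x 0) (x N)) :=
  nonstationary_fractal_interpolation_general N hN x y hx a b hy l linv hlinv φ hφmono hφsum F
    hFcontr T hTmaps hTdef
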